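/- arXiv:1904.00006 — 2 statements merged into one kernel-verified Lean document; each statement's English description precedes it below -/
import Mathlib

section
/- For all a ≠ b in {1,…,N}, all z_1,…,z_k ∈ ℂ and all distinct λ_a, λ_b ∈ ℂ, the cross terms of the dynamical operators cancel: [∑_{j=1}^k z_j e^{(j)}_{aa}, (−1)^{p(a)} (E_{ba}E_{ab} − E_{bb})/(λ_b − λ_a)] + [(−1)^{p(b)} (E_{ab}E_{ba} − E_{aa})/(λ_a − λ_b), ∑_{j=1}^k z_j e^{(j)}_{bb}] = 0. -/
open Finset

namespace Glnm

/-- Parity: `p(a) = 0` for bosonic indices (`a ≤ n` in 1-based terms, i.e. `a.val < n`),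
`p(a) = 1` for fermionic ones. -/
def par (n N : ℕ) (a : Fin N) : ℕ := if (a : ℕ) < n then 0 else 1

/-- The Koszul-sign realization `e^{(j)}_{ab} = σ^{p(a)+p(b)} ⊗ ⋯ ⊗ σ^{p(a)+p(b)} ⊗ e_{ab} ⊗ I ⊗ ⋯ ⊗ I`
on `(ℂ^N)^{⊗k}`, realized as matrices indexed by tuples `Fin k → Fin N`. -/
noncomputable def eop (n N k : ℕ) (j : Fin k) (a b : Fin N) :
    Matrix (Fin k → Fin N) (Fin k → Fin N) ℂ :=
  fun x y =>
    (if x j = a ∧ y j = b then (1 : ℂ) else 0) *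
      (-1 : ℂ) ^ ((par n N a + par n N b) *
        ∑ l ∈ Finset.univ.filter (fun l : Fin k => l < j), par n N (x l)) *
      ∏ l ∈ Finset.univ.filter (fun l : Fin k => l ≠ j),
        (if x l = y l then (1 : ℂ) else 0)

/-- `E_{ab} = ∑_{j=1}^k e^{(j)}_{ab}`. -/
noncomputable def Egen (n N k : ℕ) (a b : Fin N) : Matrix (Fin k → Fin N) (Fin k → Fin N) ℂ :=
  ∑ j : Fin k, eop n N k j a b

/-- The graded permutation `P_{ij} = ∑_{a,b} (−1)^{p(b)} e^{(i)}_{ab} e^{(j)}_{ba}`. -/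
noncomputable def Pg (n N k : ℕ) (i j : Fin k) : Matrix (Fin k → Fin N) (Fin k → Fin N) ℂ :=
  ∑ a : Fin N, ∑ b : Fin N,
    ((-1 : ℂ) ^ par n N b) • (eop n N k i a b * eop n N k j b a)

/-- Commutator. -/
def comm {α : Type*} [Ring α] (X Y : α) : α := X * Y - Y * X

/-- Anticommutator. -/
def acomm {α : Type*} [Ring α] (X Y : α) : α := X * Y + Y * X

/-- The dynamical connection matrix
`A_a = ∑_j z_j e^{(j)}_{aa} + ∑_{b ≠ a} (−1)^{p(b)} (E_{ab}E_{ba} − E_{aa})/(λ_a − λ_b)`. -/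
noncomputable def dynA (n N k : ℕ) (z : Fin k → ℂ) (lam : Fin N → ℂ) (a : Fin N) :
    Matrix (Fin k → Fin N) (Fin k → Fin N) ℂ :=
  (∑ j : Fin k, z j • eop n N k j a a) +
    ∑ b ∈ Finset.univ.filter (fun b : Fin N => b ≠ a),
      (((-1 : ℂ) ^ par n N b) / (lam a - lam b)) •
        (Egen n N k a b * Egen n N k b a - Egen n N k a a)

/-- The (twisted) KZ connection matrix
`B_i = ∑_c λ_c e^{(i)}_{cc} + ∑_{j ≠ i} P_{ij}/(z_i − z_j)`. -/
noncomputable def kzB (n N k : ℕ) (z : Fin k → ℂ) (lam : Fin N → ℂ) (i : Fin k) :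
    Matrix (Fin k → Fin N) (Fin k → Fin N) ℂ :=
  (∑ c : Fin N, lam c • eop n N k i c c) +
    ∑ j ∈ Finset.univ.filter (fun j : Fin k => j ≠ i),
      ((z i - z j)⁻¹) • Pg n N k i j

/-- Adjacent graded permutation `P_{s_l} = P_{l,l+1}` (0-based slots). -/
noncomputable def Ps (n N k : ℕ) (l : ℕ) (h : l + 1 < k) :
    Matrix (Fin k → Fin N) (Fin k → Fin N) ℂ :=
  Pg n N k ⟨l, Nat.lt_of_succ_lt h⟩ ⟨l + 1, h⟩

/-- The highest-configuration vector `e_1 ⊗ ⋯ ⊗ e_N ∈ (ℂ^N)^{⊗N}`. -/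
noncomputable def baseVec (N : ℕ) : (Fin N → Fin N) → ℂ :=
  fun x => if x = (fun j => j) then 1 else 0

/-- `Ω^i = ∑_{σ ∈ S_N} (−1)^{i·ℓ(σ)} P_σ (e_1 ⊗ ⋯ ⊗ e_N)`, where `P_σ = ρ σ` for the
(unique) multiplicative extension `ρ` of the adjacent graded permutations. -/
noncomputable def OmegaVec (N : ℕ) (i : ℕ)
    (ρ : Equiv.Perm (Fin N) →* Matrix (Fin N → Fin N) (Fin N → Fin N) ℂ) :
    (Fin N → Fin N) → ℂ :=
  ∑ σ : Equiv.Perm (Fin N),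
    (((Equiv.Perm.sign σ : ℤ) : ℂ) ^ i) • Matrix.mulVec (ρ σ) (baseVec N)

/-- The set of `(z, λ)` with pairwise distinct `z`'s and pairwise distinct `λ`'s. -/
def Usep (N : ℕ) : Set ((Fin N → ℂ) × (Fin N → ℂ)) :=
  {p | (∀ i j : Fin N, i ≠ j → p.1 i ≠ p.1 j) ∧ (∀ a b : Fin N, a ≠ b → p.2 a ≠ p.2 b)}

end Glnm

namespace Glnm

open Finset

variable {n N k : ℕ}

lemma negpow_two_mul (u v : ℕ) : (-1 : ℂ) ^ (u + 2 * v) = (-1) ^ u := by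
  rw [pow_add, pow_mul]; norm_num

lemma eop_mul_apply (i : Fin k) (a b : Fin N)
    (M : Matrix (Fin k → Fin N) (Fin k → Fin N) ℂ) (x y : Fin k → Fin N) :
    (eop n N k i a b * M) x y =
      (if x i = a then (1 : ℂ) else 0) *
        (-1 : ℂ) ^ ((par n N a + par n N b) *
          ∑ l ∈ Finset.univ.filter (fun l : Fin k => l < i), par n N (x l)) *
        M (Function.update x i b) y := by
  rw [Matrix.mul_apply, Finset.sum_eq_single (Function.update x i b)]
  · congr 1
    simp only [eop, Function.update_self]
    rw [Finset.prod_congr rfl (fun l hl => by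
      simp only [mem_filter] at hl
      rw [Function.update_of_ne hl.2])]
    simp
  · intro w _ hw
    by_cases hwi : w i = b
    · obtain ⟨l, hl⟩ : ∃ l, w l ≠ Function.update x i b l := by
        by_contra h
        push_neg at h
        exact hw (funext h)
      have hli : l ≠ i := by
        intro h; subst h; simp [hwi] at hl
      have hxl : x l ≠ w l := by
        intro h; rw [Function.update_of_ne hli] at hl; exact hl h.symm
      have : (∏ l ∈ Finset.univ.filter (fun l : Fin k => l ≠ i),
          (if x l = w l then (1:ℂ) else 0)) = 0 :=
        Finset.prod_eq_zero (i := l) (by simp [hli]) (by simp [hxl])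
      simp [eop, this]
    · simp [eop, hwi]
  · simp

lemma eop_mul_eop_same (j : Fin k) (a b d : Fin N) :
    eop n N k j a b * eop n N k j b d = eop n N k j a d := by
  ext x y
  rw [eop_mul_apply]
  simp only [eop, Function.update_self]
  have hprod : (∏ l ∈ Finset.univ.filter (fun l : Fin k => l ≠ j),
      (if Function.update x j b l = y l then (1:ℂ) else 0)) =
      ∏ l ∈ Finset.univ.filter (fun l : Fin k => l ≠ j),
      (if x l = y l then (1:ℂ) else 0) :=
    Finset.prod_congr rfl (fun l hl => by
      simp only [mem_filter] at hl
      rw [Function.update_of_ne hl.2])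
  have hsum : (∑ l ∈ Finset.univ.filter (fun l : Fin k => l < j),
      par n N (Function.update x j b l)) =
      ∑ l ∈ Finset.univ.filter (fun l : Fin k => l < j), par n N (x l) :=
    Finset.sum_congr rfl (fun l hl => by
      simp only [mem_filter] at hl
      rw [Function.update_of_ne (ne_of_lt hl.2)])
  rw [hprod, hsum]
  have hs : (-1:ℂ) ^ ((par n N a + par n N b) *
        ∑ l ∈ Finset.univ.filter (fun l : Fin k => l < j), par n N (x l)) *
      (-1:ℂ) ^ ((par n N b + par n N d) *
        ∑ l ∈ Finset.univ.filter (fun l : Fin k => l < j), par n N (x l)) =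
      (-1:ℂ) ^ ((par n N a + par n N d) *
        ∑ l ∈ Finset.univ.filter (fun l : Fin k => l < j), par n N (x l)) := by
    rw [← pow_add, show (par n N a + par n N b) *
        (∑ l ∈ Finset.univ.filter (fun l : Fin k => l < j), par n N (x l)) +
        (par n N b + par n N d) *
        (∑ l ∈ Finset.univ.filter (fun l : Fin k => l < j), par n N (x l)) =
        (par n N a + par n N d) *
        (∑ l ∈ Finset.univ.filter (fun l : Fin k => l < j), par n N (x l)) +
        2 * (par n N b *
          ∑ l ∈ Finset.univ.filter (fun l : Fin k => l < j), par n N (x l)) by ring,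
      negpow_two_mul]
  by_cases h1 : x j = a <;> by_cases h2 : y j = d <;> simp [h1, h2, ← hs] <;> ring

lemma eop_mul_eop_ne (j : Fin k) {b c : Fin N} (a d : Fin N) (hbc : b ≠ c) :
    eop n N k j a b * eop n N k j c d = 0 := by
  ext x y
  rw [eop_mul_apply]
  simp [eop, Function.update_self, hbc]

lemma eop_swap (i j : Fin k) (hij : i ≠ j) (a b c d : Fin N) :
    eop n N k i a b * eop n N k j c d =
      ((-1 : ℂ) ^ ((par n N a + par n N b) * (par n N c + par n N d))) •
        (eop n N k j c d * eop n N k i a b) := by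
  ext x y
  rw [Matrix.smul_apply, eop_mul_apply, eop_mul_apply]
  simp only [eop, smul_eq_mul]
  have h1 : Function.update x i b j = x j := Function.update_of_ne hij.symm b x
  have h2 : Function.update x j d i = x i := Function.update_of_ne hij d x
  have hP1 : (∏ l ∈ Finset.univ.filter (fun l : Fin k => l ≠ j),
      (if Function.update x i b l = y l then (1:ℂ) else 0)) =
      (if y i = b then (1:ℂ) else 0) *
      ∏ l ∈ Finset.univ.filter (fun l : Fin k => l ≠ i ∧ l ≠ j),
        (if x l = y l then (1:ℂ) else 0) := by
    rw [← Finset.mul_prod_erase (Finset.univ.filter (fun l : Fin k => l ≠ j))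
      _ (show i ∈ Finset.univ.filter (fun l : Fin k => l ≠ j) by simp [hij])]
    congr 1
    · simp [Function.update_self, eq_comm]
    · rw [show (Finset.univ.filter (fun l : Fin k => l ≠ j)).erase i =
        Finset.univ.filter (fun l : Fin k => l ≠ i ∧ l ≠ j) by
          ext l; simp [Finset.mem_erase, and_comm]]
      exact Finset.prod_congr rfl fun l hl => by
        simp only [mem_filter] at hl
        rw [Function.update_of_ne hl.2.1]
  have hP2 : (∏ l ∈ Finset.univ.filter (fun l : Fin k => l ≠ i),
      (if Function.update x j d l = y l then (1:ℂ) else 0)) =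
      (if y j = d then (1:ℂ) else 0) *
      ∏ l ∈ Finset.univ.filter (fun l : Fin k => l ≠ i ∧ l ≠ j),
        (if x l = y l then (1:ℂ) else 0) := by
    rw [← Finset.mul_prod_erase (Finset.univ.filter (fun l : Fin k => l ≠ i))
      _ (show j ∈ Finset.univ.filter (fun l : Fin k => l ≠ i) by simp [hij.symm])]
    congr 1
    · simp [Function.update_self, eq_comm]
    · rw [show (Finset.univ.filter (fun l : Fin k => l ≠ i)).erase j =
        Finset.univ.filter (fun l : Fin k => l ≠ i ∧ l ≠ j) by
          ext l; simp [Finset.mem_erase, and_comm]]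
      exact Finset.prod_congr rfl fun l hl => by
        simp only [mem_filter] at hl
        rw [Function.update_of_ne hl.2.2]
  rw [h1, h2, hP1, hP2]
  by_cases hxa : x i = a
  · by_cases hxc : x j = c
    · by_cases hyb : y i = b
      · by_cases hyd : y j = d
        · simp only [hxa, hxc, hyb, hyd, and_self, if_pos, if_true, one_mul, mul_one]
          rcases hij.lt_or_gt with hlt | hlt
          · have hSi : (∑ l ∈ Finset.univ.filter (fun l : Fin k => l < i),
                par n N (Function.update x j d l)) =
                ∑ l ∈ Finset.univ.filter (fun l : Fin k => l < i), par n N (x l) :=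
              Finset.sum_congr rfl fun l hl => by
                simp only [mem_filter] at hl
                rw [Function.update_of_ne (ne_of_lt (hl.2.trans hlt))]
            have hSj : (∑ l ∈ Finset.univ.filter (fun l : Fin k => l < j),
                par n N (Function.update x i b l)) =
                par n N b + ∑ l ∈ (Finset.univ.filter (fun l : Fin k => l < j)).erase i,
                  par n N (x l) := by
              rw [← Finset.add_sum_erase (Finset.univ.filter (fun l : Fin k => l < j))
                _ (show i ∈ Finset.univ.filter (fun l : Fin k => l < j) by simp [hlt])]
              congr 1
              · simp
              · exact Finset.sum_congr rfl fun l hl =>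
                  by rw [Function.update_of_ne (Finset.ne_of_mem_erase hl)]
            have hSj' : (∑ l ∈ Finset.univ.filter (fun l : Fin k => l < j),
                par n N (x l)) =
                par n N a + ∑ l ∈ (Finset.univ.filter (fun l : Fin k => l < j)).erase i,
                  par n N (x l) := by
              rw [← Finset.add_sum_erase (Finset.univ.filter (fun l : Fin k => l < j))
                _ (show i ∈ Finset.univ.filter (fun l : Fin k => l < j) by simp [hlt]), hxa]
            rw [hSi, hSj, hSj']
            generalize (∏ l ∈ Finset.univ.filter (fun l : Fin k => l ≠ i ∧ l ≠ j),
              (if x l = y l then (1:ℂ) else 0)) = P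
            generalize (∑ l ∈ (Finset.univ.filter (fun l : Fin k => l < j)).erase i,
              par n N (x l)) = T
            generalize (∑ l ∈ Finset.univ.filter (fun l : Fin k => l < i),
              par n N (x l)) = Si
            have hsc : (-1:ℂ)^((par n N a + par n N b)*Si) *
                (-1:ℂ)^((par n N c + par n N d)*(par n N b + T)) =
                (-1:ℂ)^((par n N a + par n N b)*(par n N c + par n N d)) *
                ((-1:ℂ)^((par n N c + par n N d)*(par n N a + T)) *
                  (-1:ℂ)^((par n N a + par n N b)*Si)) := by
              rw [← pow_add, ← pow_add, ← pow_add,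
                show (par n N a + par n N b)*(par n N c + par n N d) +
                  ((par n N c + par n N d)*(par n N a + T) + (par n N a + par n N b)*Si) =
                  ((par n N a + par n N b)*Si + (par n N c + par n N d)*(par n N b + T)) +
                  2*((par n N c + par n N d)*(par n N a)) from by ring, negpow_two_mul]
            linear_combination P * hsc
          · have hSj2 : (∑ l ∈ Finset.univ.filter (fun l : Fin k => l < j),
                par n N (Function.update x i b l)) =
                ∑ l ∈ Finset.univ.filter (fun l : Fin k => l < j), par n N (x l) :=
              Finset.sum_congr rfl fun l hl => by
                simp only [mem_filter] at hl
                rw [Function.update_of_ne (ne_of_lt (hl.2.trans hlt))]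
            have hSi2 : (∑ l ∈ Finset.univ.filter (fun l : Fin k => l < i),
                par n N (Function.update x j d l)) =
                par n N d + ∑ l ∈ (Finset.univ.filter (fun l : Fin k => l < i)).erase j,
                  par n N (x l) := by
              rw [← Finset.add_sum_erase (Finset.univ.filter (fun l : Fin k => l < i))
                _ (show j ∈ Finset.univ.filter (fun l : Fin k => l < i) by simp [hlt])]
              congr 1
              · simp
              · exact Finset.sum_congr rfl fun l hl =>
                  by rw [Function.update_of_ne (Finset.ne_of_mem_erase hl)]
            have hSi2' : (∑ l ∈ Finset.univ.filter (fun l : Fin k => l < i),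
                par n N (x l)) =
                par n N c + ∑ l ∈ (Finset.univ.filter (fun l : Fin k => l < i)).erase j,
                  par n N (x l) := by
              rw [← Finset.add_sum_erase (Finset.univ.filter (fun l : Fin k => l < i))
                _ (show j ∈ Finset.univ.filter (fun l : Fin k => l < i) by simp [hlt]), hxc]
            rw [hSj2, hSi2, hSi2']
            generalize (∏ l ∈ Finset.univ.filter (fun l : Fin k => l ≠ i ∧ l ≠ j),
              (if x l = y l then (1:ℂ) else 0)) = P
            generalize (∑ l ∈ (Finset.univ.filter (fun l : Fin k => l < i)).erase j,
              par n N (x l)) = U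
            generalize (∑ l ∈ Finset.univ.filter (fun l : Fin k => l < j),
              par n N (x l)) = Sj
            have hsc : (-1:ℂ)^((par n N a + par n N b)*(par n N c + U)) *
                (-1:ℂ)^((par n N c + par n N d)*Sj) =
                (-1:ℂ)^((par n N a + par n N b)*(par n N c + par n N d)) *
                ((-1:ℂ)^((par n N c + par n N d)*Sj) *
                  (-1:ℂ)^((par n N a + par n N b)*(par n N d + U))) := by
              rw [← pow_add, ← pow_add, ← pow_add,
                show (par n N a + par n N b)*(par n N c + par n N d) +
                  ((par n N c + par n N d)*Sj + (par n N a + par n N b)*(par n N d + U)) =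
                  ((par n N a + par n N b)*(par n N c + U) + (par n N c + par n N d)*Sj) +
                  2*((par n N a + par n N b)*(par n N d)) from by ring, negpow_two_mul]
            linear_combination P * hsc
        · simp [hyd]
      · simp [hyb]
    · simp [hxc]
  · simp [hxa]

lemma eop_diag_comm (i j : Fin k) (hij : i ≠ j) (c a b : Fin N) :
    eop n N k i c c * eop n N k j a b = eop n N k j a b * eop n N k i c c := by
  rw [eop_swap i j hij c c a b,
    show (par n N c + par n N c) * (par n N a + par n N b) =
      0 + 2 * (par n N c * (par n N a + par n N b)) from by ring,
    negpow_two_mul, pow_zero, one_smul]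

section CommLemmas

variable (z : Fin k → ℂ)

lemma comm_smul_right (r : ℂ) (X Y : Matrix (Fin k → Fin N) (Fin k → Fin N) ℂ) :
    comm X (r • Y) = r • comm X Y := by
  simp [comm, Matrix.mul_smul, Matrix.smul_mul, smul_sub]

lemma comm_smul_left (r : ℂ) (X Y : Matrix (Fin k → Fin N) (Fin k → Fin N) ℂ) :
    comm (r • X) Y = r • comm X Y := by
  simp [comm, Matrix.mul_smul, Matrix.smul_mul, smul_sub]

lemma comm_sub_right (X Y Z : Matrix (Fin k → Fin N) (Fin k → Fin N) ℂ) :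
    comm X (Y - Z) = comm X Y - comm X Z := by
  simp only [comm, mul_sub, sub_mul]; abel

lemma comm_sub_left (X Y Z : Matrix (Fin k → Fin N) (Fin k → Fin N) ℂ) :
    comm (Y - Z) X = comm Y X - comm Z X := by
  simp only [comm, mul_sub, sub_mul]; abel

lemma comm_anti (X Y : Matrix (Fin k → Fin N) (Fin k → Fin N) ℂ) :
    comm X Y = -comm Y X := by
  simp only [comm]; abel

lemma comm_mul_right (X Y Z : Matrix (Fin k → Fin N) (Fin k → Fin N) ℂ) :
    comm X (Y * Z) = comm X Y * Z + Y * comm X Z := by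
  simp only [comm, mul_sub, sub_mul, mul_assoc]; abel

lemma comm_dsum_E₁ (c d : Fin N) (hdc : d ≠ c) :
    comm (∑ j : Fin k, z j • eop n N k j c c) (Egen n N k c d) =
      ∑ j : Fin k, z j • eop n N k j c d := by
  unfold comm Egen
  simp only [Finset.sum_mul, Finset.mul_sum, smul_mul_assoc, mul_smul_comm, Finset.smul_sum]
  rw [show (∑ x : Fin k, ∑ x_1 : Fin k, z x • (eop n N k x_1 c d * eop n N k x c c)) =
    ∑ x_1 : Fin k, ∑ x : Fin k, z x • (eop n N k x_1 c d * eop n N k x c c) from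
    Finset.sum_comm]
  rw [← Finset.sum_sub_distrib]
  refine Finset.sum_congr rfl fun i _ => ?_
  rw [← Finset.sum_sub_distrib, Finset.sum_eq_single i]
  · rw [eop_mul_eop_same, eop_mul_eop_ne i c c hdc]
    simp
  · intro j _ hji
    rw [eop_diag_comm j i hji c c d]
    simp
  · simp

lemma comm_dsum_E₂ (c d : Fin N) (hcd : c ≠ d) :
    comm (∑ j : Fin k, z j • eop n N k j c c) (Egen n N k d c) =
      -∑ j : Fin k, z j • eop n N k j d c := by
  unfold comm Egen
  simp only [Finset.sum_mul, Finset.mul_sum, smul_mul_assoc, mul_smul_comm, Finset.smul_sum]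
  rw [show (∑ x : Fin k, ∑ x_1 : Fin k, z x • (eop n N k x_1 d c * eop n N k x c c)) =
    ∑ x_1 : Fin k, ∑ x : Fin k, z x • (eop n N k x_1 d c * eop n N k x c c) from
    Finset.sum_comm]
  rw [← Finset.sum_sub_distrib, ← Finset.sum_neg_distrib]
  refine Finset.sum_congr rfl fun i _ => ?_
  rw [← Finset.sum_sub_distrib, Finset.sum_eq_single i]
  · rw [eop_mul_eop_ne i c c hcd, eop_mul_eop_same i d c c]
    simp
  · intro j _ hji
    rw [eop_diag_comm j i hji c d c]
    simp
  · simp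

lemma comm_dsum_diag (c d : Fin N) (hcd : c ≠ d) :
    comm (∑ j : Fin k, z j • eop n N k j c c) (Egen n N k d d) = 0 := by
  unfold comm Egen
  simp only [Finset.sum_mul, Finset.mul_sum, smul_mul_assoc, mul_smul_comm, Finset.smul_sum]
  rw [show (∑ x : Fin k, ∑ x_1 : Fin k, z x • (eop n N k x_1 d d * eop n N k x c c)) =
    ∑ x_1 : Fin k, ∑ x : Fin k, z x • (eop n N k x_1 d d * eop n N k x c c) from
    Finset.sum_comm]
  rw [← Finset.sum_sub_distrib]
  refine Finset.sum_eq_zero fun i _ => ?_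
  rw [← Finset.sum_sub_distrib]
  refine Finset.sum_eq_zero fun j _ => ?_
  by_cases hij : j = i
  · subst hij
    rw [eop_mul_eop_ne j c d hcd, eop_mul_eop_ne j d c hcd.symm]
    simp
  · rw [eop_diag_comm j i hij c d d]
    simp

lemma par_sq (v : Fin N) : par n N v * par n N v = par n N v := by
  unfold par; split <;> simp

lemma cross_key (a b : Fin N) (hab : a ≠ b) :
    ((-1:ℂ) ^ par n N a) • (Egen n N k b a * (∑ j : Fin k, z j • eop n N k j a b) -
        (∑ j : Fin k, z j • eop n N k j b a) * Egen n N k a b) =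
      ((-1:ℂ) ^ par n N b) • ((∑ j : Fin k, z j • eop n N k j a b) * Egen n N k b a -
        Egen n N k a b * (∑ j : Fin k, z j • eop n N k j b a)) := by
  have hst : ((-1:ℂ) ^ par n N a) *
      (-1:ℂ) ^ ((par n N b + par n N a) * (par n N a + par n N b)) =
      (-1:ℂ) ^ par n N b := by
    rw [← pow_add, show (par n N b + par n N a) * (par n N a + par n N b) =
      par n N a * par n N a + par n N a * par n N b + par n N a * par n N b +
        par n N b * par n N b from by ring, par_sq, par_sq,
      show par n N a + (par n N a + par n N a * par n N b + par n N a * par n N b +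
        par n N b) = par n N b + 2 * (par n N a + par n N a * par n N b) from by ring,
      negpow_two_mul]
  unfold Egen
  simp only [Finset.sum_mul, Finset.mul_sum, smul_mul_assoc, mul_smul_comm, smul_sub,
    Finset.smul_sum]
  rw [show (∑ x : Fin k, ∑ x_1 : Fin k, ((-1:ℂ) ^ par n N a) •
      z x • (eop n N k x_1 b a * eop n N k x a b)) =
    ∑ x_1 : Fin k, ∑ x : Fin k, ((-1:ℂ) ^ par n N a) •
      z x • (eop n N k x_1 b a * eop n N k x a b) from Finset.sum_comm]
  rw [show (∑ x : Fin k, ∑ x_1 : Fin k, ((-1:ℂ) ^ par n N b) •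
      z x • (eop n N k x_1 a b * eop n N k x b a)) =
    ∑ x_1 : Fin k, ∑ x : Fin k, ((-1:ℂ) ^ par n N b) •
      z x • (eop n N k x_1 a b * eop n N k x b a) from Finset.sum_comm]
  rw [← Finset.sum_sub_distrib, ← Finset.sum_sub_distrib]
  refine Finset.sum_congr rfl fun i _ => ?_
  rw [← Finset.sum_sub_distrib, ← Finset.sum_sub_distrib]
  refine Finset.sum_congr rfl fun j _ => ?_
  by_cases hij : i = j
  · subst hij; simp
  · rw [eop_swap i j hij b a a b, eop_swap j i (fun h => hij h.symm) b a a b]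
    simp only [smul_smul]
    rw [show (-1:ℂ) ^ par n N a * (z j *
        (-1:ℂ) ^ ((par n N b + par n N a) * (par n N a + par n N b))) =
      (-1:ℂ) ^ par n N b * z j from by rw [← hst]; ring]

end CommLemmas

end Glnm


open Glnm in
/-- the cross terms of the dynamical operators cancel. -/
theorem dynamical_cross_terms (n m k : ℕ) (hk : 1 ≤ k)
    (a b : Fin (n + m)) (hab : a ≠ b) (z : Fin k → ℂ)
    (lamA lamB : ℂ) (hl : lamA ≠ lamB) :
    comm (∑ j : Fin k, z j • eop n (n + m) k j a a)
        ((((-1 : ℂ) ^ par n (n + m) a) / (lamB - lamA)) •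
          (Egen n (n + m) k b a * Egen n (n + m) k a b - Egen n (n + m) k b b)) +
      comm ((((-1 : ℂ) ^ par n (n + m) b) / (lamA - lamB)) •
          (Egen n (n + m) k a b * Egen n (n + m) k b a - Egen n (n + m) k a a))
        (∑ j : Fin k, z j • eop n (n + m) k j b b) = 0 := by
  have hba : b ≠ a := fun h => hab h.symm
  have hK := cross_key (n := n) (N := n + m) (k := k) z a b
  rw [comm_smul_right, comm_smul_left, comm_sub_right, comm_sub_left,
    comm_dsum_diag z a b hab,
    comm_mul_right, comm_dsum_E₂ z a b hab, comm_dsum_E₁ z a b hba,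
    comm_anti (Egen n (n + m) k a b * Egen n (n + m) k b a),
    comm_anti (Egen n (n + m) k a a),
    comm_dsum_diag z b a hba,
    comm_mul_right, comm_dsum_E₂ z b a hba, comm_dsum_E₁ z b a hab]
  rw [sub_zero, neg_zero, sub_zero,
    show ((-∑ j : Fin k, z j • eop n (n + m) k j b a) * Egen n (n + m) k a b +
        Egen n (n + m) k b a * ∑ j : Fin k, z j • eop n (n + m) k j a b) =
      (Egen n (n + m) k b a * (∑ j : Fin k, z j • eop n (n + m) k j a b) -
        (∑ j : Fin k, z j • eop n (n + m) k j b a) * Egen n (n + m) k a b) from by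
      rw [neg_mul]; abel,
    show ((-∑ j : Fin k, z j • eop n (n + m) k j a b) * Egen n (n + m) k b a +
        Egen n (n + m) k a b * ∑ j : Fin k, z j • eop n (n + m) k j b a) =
      -((∑ j : Fin k, z j • eop n (n + m) k j a b) * Egen n (n + m) k b a -
        Egen n (n + m) k a b * ∑ j : Fin k, z j • eop n (n + m) k j b a) from by
      rw [neg_mul]; abel]
  rw [show lamA - lamB = -(lamB - lamA) from by ring, div_neg]
  rw [div_eq_inv_mul, div_eq_inv_mul, mul_smul, hK hab]
  module
end

section
/- Let a, b, c ∈ {1,…,N} be pairwise distinct with a ≤ n, b ≤ n and c > n (i.e. p(a)=p(b)=0, p(c)=1), and let λ_a, λ_b, λ_c ∈ ℂ be pairwise distinct. Then −[E_{ab}E_{ba}/(λ_a−λ_b), E_{bc}E_{cb}/(λ_b−λ_c)] + [E_{ac}E_{ca}/(λ_a−λ_c), E_{bc}E_{cb}/(λ_b−λ_c)] − [E_{ac}E_{ca}/(λ_a−λ_c), E_{ba}E_{ab}/(λ_b−λ_a)] = 0. -/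
open Finset

namespace Glnm

section Aux

variable {n N k : ℕ}

lemma neg_one_pow_congr {s t : ℕ} (h : s % 2 = t % 2) : (-1:ℂ)^s = (-1:ℂ)^t := by
  conv_lhs => rw [← Nat.div_add_mod s 2]
  conv_rhs => rw [← Nat.div_add_mod t 2]
  rw [pow_add, pow_add, pow_mul, pow_mul, neg_one_sq, one_pow, one_pow, h]

/-- partial parity sum -/
def Spar (n N k : ℕ) (j : Fin k) (x : Fin k → Fin N) : ℕ :=
  ∑ l ∈ Finset.univ.filter (fun l : Fin k => l < j), par n N (x l)

lemma eop_apply' (j : Fin k) (a b : Fin N) (x z : Fin k → Fin N) :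
    eop n N k j a b x z =
      if x j = a ∧ z = Function.update x j b
      then (-1:ℂ) ^ ((par n N a + par n N b) * Spar n N k j x) else 0 := by
  show (if x j = a ∧ z j = b then (1 : ℂ) else 0) * _ * _ = _
  rw [Finset.prod_boole]
  by_cases hxa : x j = a
  · by_cases hz : z = Function.update x j b
    · subst hz
      have h2 : ∀ l ∈ Finset.univ.filter (fun l : Fin k => l ≠ j),
          x l = Function.update x j b l := by
        intro l hl
        rw [Function.update_of_ne (Finset.mem_filter.mp hl).2]
      rw [if_pos ⟨hxa, Function.update_self j b x⟩, if_pos h2, if_pos ⟨hxa, rfl⟩]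
      simp [Spar]
    · have hnot : ¬ (z j = b ∧ ∀ l ∈ Finset.univ.filter (fun l : Fin k => l ≠ j),
          x l = z l) := by
        rintro ⟨hzj, hall⟩
        apply hz
        funext l
        by_cases hl : l = j
        · subst hl; rw [Function.update_self]; exact hzj
        · rw [Function.update_of_ne hl]
          exact (hall l (by simp [hl])).symm
      have c2 : ¬(x j = a ∧ z = Function.update x j b) := fun hh => hz hh.2
      rcases not_and_or.mp hnot with h | h
      · have c1 : ¬(x j = a ∧ z j = b) := fun hh => h hh.2
        rw [if_neg c1, if_neg c2, zero_mul, zero_mul]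
      · rw [if_neg h, if_neg c2, mul_zero]
  · have c1 : ¬(x j = a ∧ z j = b) := fun hh => hxa hh.1
    have c2 : ¬(x j = a ∧ z = Function.update x j b) := fun hh => hxa hh.1
    rw [if_neg c1, if_neg c2, zero_mul, zero_mul]

lemma Spar_update_of_not_lt {i j : Fin k} (h : ¬ i < j) (x : Fin k → Fin N) (b : Fin N) :
    Spar n N k j (Function.update x i b) = Spar n N k j x := by
  unfold Spar
  refine Finset.sum_congr rfl fun l hl => ?_
  have hli : l ≠ i := fun e => h (e ▸ (Finset.mem_filter.mp hl).2)
  rw [Function.update_of_ne hli]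

lemma Spar_update_lt {i j : Fin k} (hij : i < j) (x : Fin k → Fin N) (b : Fin N) :
    Spar n N k j (Function.update x i b) + par n N (x i)
      = Spar n N k j x + par n N b := by
  unfold Spar
  have hmem : i ∈ Finset.univ.filter (fun l : Fin k => l < j) := by simp [hij]
  have hcomp : ∀ l, par n N (Function.update x i b l)
      = Function.update (fun l => par n N (x l)) i (par n N b) l := by
    intro l
    by_cases hl : l = i
    · subst hl; simp
    · simp [Function.update_of_ne hl]
  rw [Finset.sum_congr rfl (fun l _ => hcomp l)]
  rw [Finset.sum_update_of_mem hmem]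
  rw [Finset.sum_eq_sum_sdiff_singleton_add hmem (fun l => par n N (x l))]
  ring

lemma collapse {ι : Type*} [Fintype ι] [DecidableEq ι] (P : Prop) [Decidable P]
    (w0 : ι) (s : ℂ) (g : ι → ℂ) :
    ∑ z : ι, (if P ∧ z = w0 then s else 0) * g z = if P then s * g w0 else 0 := by
  rw [Finset.sum_eq_single w0]
  · by_cases hP : P <;> simp [hP]
  · intro z _ hz
    have : ¬(P ∧ z = w0) := fun h => hz h.2
    rw [if_neg this, zero_mul]
  · intro h; exact absurd (Finset.mem_univ _) h

lemma eop_mul_same (j : Fin k) (a b c d : Fin N) :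
    eop n N k j a b * eop n N k j c d = if b = c then eop n N k j a d else 0 := by
  ext x y
  rw [Matrix.mul_apply]
  simp only [eop_apply']
  rw [collapse]
  rw [Function.update_self, Function.update_idem,
      Spar_update_of_not_lt (lt_irrefl j)]
  by_cases hbc : b = c
  · subst hbc
    rw [if_pos rfl, eop_apply']
    by_cases hxa : x j = a
    · by_cases hy : y = Function.update x j d
      · rw [if_pos hxa, if_pos ⟨rfl, hy⟩, if_pos ⟨hxa, hy⟩, ← pow_add]
        apply neg_one_pow_congr
        have : (par n N a + par n N b) * Spar n N k j x
            + (par n N b + par n N d) * Spar n N k j x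
            = (par n N a + par n N d) * Spar n N k j x
              + 2 * (par n N b * Spar n N k j x) := by ring
        omega
      · have c1 : ¬(b = b ∧ y = Function.update x j d) := fun hh => hy hh.2
        have c2 : ¬(x j = a ∧ y = Function.update x j d) := fun hh => hy hh.2
        rw [if_pos hxa, if_neg c1, if_neg c2, mul_zero]
    · have c2 : ¬(x j = a ∧ y = Function.update x j d) := fun hh => hxa hh.1
      rw [if_neg hxa, if_neg c2]
  · have c1 : ¬(b = c ∧ y = Function.update x j d) := fun hh => hbc hh.1
    rw [if_neg hbc, if_neg c1, mul_zero, ite_self]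
    exact (Matrix.zero_apply _ _).symm

lemma eop_mul_cross {i j : Fin k} (hij : i < j) (a b c d : Fin N) :
    eop n N k i a b * eop n N k j c d
      = ((-1:ℂ)^((par n N a + par n N b) * (par n N c + par n N d))) •
          (eop n N k j c d * eop n N k i a b) := by
  have hne : i ≠ j := ne_of_lt hij
  ext x y
  rw [Matrix.smul_apply, Matrix.mul_apply, Matrix.mul_apply, smul_eq_mul]
  simp only [eop_apply']
  rw [collapse, collapse]
  rw [Function.update_of_ne (Ne.symm hne), Function.update_of_ne hne,
      Function.update_comm (Ne.symm hne),
      Spar_update_of_not_lt (lt_asymm hij)]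
  by_cases h1 : x i = a
  · by_cases h2 : x j = c
    · by_cases h3 : y = Function.update (Function.update x i b) j d
      · rw [if_pos h1, if_pos ⟨h2, h3⟩, if_pos h2, if_pos ⟨h1, h3⟩]
        rw [← pow_add, ← pow_add, ← pow_add]
        apply neg_one_pow_congr
        have hS := Spar_update_lt (n := n) (N := N) hij x b
        rw [h1] at hS
        have e1 : (par n N c + par n N d) * Spar n N k j (Function.update x i b)
              + (par n N c + par n N d) * par n N a
            = (par n N c + par n N d) * Spar n N k j x
              + (par n N c + par n N d) * par n N b := by
          rw [← Nat.left_distrib, ← Nat.left_distrib, hS]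
        have e2 : (par n N a + par n N b) * (par n N c + par n N d)
            = (par n N c + par n N d) * par n N a
              + (par n N c + par n N d) * par n N b := by ring
        omega
      · have c1 : ¬(x j = c ∧ y = Function.update (Function.update x i b) j d) :=
          fun hh => h3 hh.2
        have c2 : ¬(x i = a ∧ y = Function.update (Function.update x i b) j d) :=
          fun hh => h3 hh.2
        rw [if_pos h1, if_neg c1, if_pos h2, if_neg c2]
        simp
    · have c1 : ¬(x j = c ∧ y = Function.update (Function.update x i b) j d) :=
        fun hh => h2 hh.1
      rw [if_pos h1, if_neg c1, if_neg h2]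
      simp
  · have c2 : ¬(x i = a ∧ y = Function.update (Function.update x i b) j d) :=
      fun hh => h1 hh.1
    rw [if_neg h1, if_neg c2]
    simp

lemma eop_mul_comm {i j : Fin k} (hij : i ≠ j) (a b c d : Fin N) :
    eop n N k i a b * eop n N k j c d
      = ((-1:ℂ)^((par n N a + par n N b) * (par n N c + par n N d))) •
          (eop n N k j c d * eop n N k i a b) := by
  rcases lt_or_gt_of_ne hij with h | h
  · exact eop_mul_cross h a b c d
  · rw [eop_mul_cross h c d a b, smul_smul, ← pow_add]
    have : (-1:ℂ) ^ ((par n N a + par n N b) * (par n N c + par n N d)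
        + (par n N c + par n N d) * (par n N a + par n N b)) = 1 := by
      apply Even.neg_one_pow
      exact ⟨(par n N a + par n N b) * (par n N c + par n N d), by ring⟩
    rw [this, one_smul]

lemma Ebracket (a b c d : Fin N) :
    Egen n N k a b * Egen n N k c d
      - ((-1:ℂ)^((par n N a + par n N b) * (par n N c + par n N d))) •
          (Egen n N k c d * Egen n N k a b)
    = (if b = c then Egen n N k a d else 0)
      - ((-1:ℂ)^((par n N a + par n N b) * (par n N c + par n N d))) •
          (if d = a then Egen n N k c b else 0) := by
  unfold Egen
  rw [Finset.sum_mul_sum, Finset.sum_mul_sum, Finset.sum_comm (s := Finset.univ)]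
  rw [Finset.smul_sum]
  simp only [Finset.smul_sum]
  rw [← Finset.sum_sub_distrib]
  simp only [← Finset.sum_sub_distrib]
  have hterm : ∀ j : Fin k,
      (∑ i : Fin k, (eop n N k i a b * eop n N k j c d
        - ((-1:ℂ)^((par n N a + par n N b) * (par n N c + par n N d))) •
            (eop n N k j c d * eop n N k i a b)))
      = (if b = c then eop n N k j a d else 0)
        - ((-1:ℂ)^((par n N a + par n N b) * (par n N c + par n N d))) •
            (if d = a then eop n N k j c b else 0) := by
    intro j
    rw [Finset.sum_eq_single j]
    · rw [eop_mul_same, eop_mul_same]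
    · intro i _ hij
      rw [eop_mul_comm hij, sub_self]
    · intro h; exact absurd (Finset.mem_univ _) h
  rw [Finset.sum_congr rfl (fun j _ => hterm j)]
  rw [Finset.sum_sub_distrib]
  congr 1
  · by_cases hbc : b = c <;> simp [hbc]
  · rw [← Finset.smul_sum]
    by_cases hda : d = a <;> simp [hda]

end Aux

end Glnm

open Glnm in
lemma cert_lemma {α : Type*} [Ring α] (A P B Q C R Ha Hb Hc : α)
    (h1 : P*A - A*P = Hb - Ha)
    (h2 : B*A - A*B = -C)
    (h3 : Q*A - A*Q = 0)
    (h4 : C*A - A*C = 0)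
    (h5 : R*A - A*R = Q)
    (h6 : B*P - P*B = 0)
    (h7 : Q*P - P*Q = R)
    (h8 : C*P - P*C = -B)
    (h9 : R*P - P*R = 0)
    (h10 : Q*B + B*Q = Hc + Hb)
    (h11 : C*B + B*C = 0)
    (h12 : R*B + B*R = P)
    (h13 : C*Q + Q*C = A)
    (h14 : R*Q + Q*R = 0)
    (h15 : R*C + C*R = Hc + Ha) :
    ((A*P)*(B*Q) - (B*Q)*(A*P) = (C*R)*(B*Q) - (B*Q)*(C*R))
    ∧ ((A*P)*(B*Q) - (B*Q)*(A*P) = (C*R)*(P*A) - (P*A)*(C*R)) := by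
  have d1 : P*A - A*P - (Hb - Ha) = 0 := by rw [h1, sub_self]
  have d2 : B*A - A*B - (-C) = 0 := by rw [h2, sub_self]
  have d3 : Q*A - A*Q = 0 := h3
  have d4 : C*A - A*C = 0 := h4
  have d5 : R*A - A*R - Q = 0 := by rw [h5, sub_self]
  have d6 : B*P - P*B = 0 := h6
  have d7 : Q*P - P*Q - R = 0 := by rw [h7, sub_self]
  have d8 : C*P - P*C - (-B) = 0 := by rw [h8, sub_self]
  have d9 : R*P - P*R = 0 := h9
  have d10 : Q*B + B*Q - (Hc + Hb) = 0 := by rw [h10, sub_self]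
  have d11 : C*B + B*C = 0 := h11
  have d12 : R*B + B*R - P = 0 := by rw [h12, sub_self]
  have d13 : C*Q + Q*C - A = 0 := by rw [h13, sub_self]
  have d14 : R*Q + Q*R = 0 := h14
  have d15 : R*C + C*R - (Hc + Ha) = 0 := by rw [h15, sub_self]
  constructor
  · have key : (A*P)*(B*Q) - (B*Q)*(A*P) - ((C*R)*(B*Q) - (B*Q)*(C*R)) =
      - B*(Q*A - A*Q)*P - C*(R*B + B*R - P)*Q - (B*A - A*B - (-C))*Q*P + (C*B + B*C)*R*Q - (C*P - P*C - (-B))*Q - A*B*(Q*P - P*Q - R) + (C*Q + Q*C - A)*P - B*C*(R*Q + Q*R) - P*(C*Q + Q*C - A) - A*(B*P - P*B)*Q - Q*(C*P - P*C - (-B)) + B*(C*Q + Q*C - A)*R - (P*A - A*P - (Hb - Ha)) - (Q*P - P*Q - R)*C + (Q*B + B*Q - (Hc + Hb)) + (B*A - A*B - (-C))*R - (R*C + C*R - (Hc + Ha)) := by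
      noncomm_ring
    simp only [d1, d2, d3, d4, d5, d6, d7, d8, d9, d10, d11, d12, d13, d14, d15] at key
    simp only [mul_zero, zero_mul, neg_zero, add_zero, zero_add, sub_zero, zero_sub, neg_neg, sub_self, mul_neg, neg_mul] at key
    exact sub_eq_zero.mp key
  · have key : (A*P)*(B*Q) - (B*Q)*(A*P) - ((C*R)*(P*A) - (P*A)*(C*R)) =
      - B*(Q*A - A*Q)*P - C*(R*P - P*R)*A - (B*A - A*B - (-C))*Q*P - (C*P - P*C - (-B))*R*A - A*B*(Q*P - P*Q - R) + (C*Q + Q*C - A)*P - P*C*(R*A - A*R - Q) + B*(R*A - A*R - Q) - A*(B*P - P*B)*Q - Q*(C*P - P*C - (-B)) - P*(C*A - A*C)*R - P*(C*Q + Q*C - A) + (B*A - A*B - (-C))*R - (Q*P - P*Q - R)*C + (Q*B + B*Q - (Hc + Hb)) - (P*A - A*P - (Hb - Ha)) - (R*C + C*R - (Hc + Ha)) := by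
      noncomm_ring
    simp only [d1, d2, d3, d4, d5, d6, d7, d8, d9, d10, d11, d12, d13, d14, d15] at key
    simp only [mul_zero, zero_mul, neg_zero, add_zero, zero_add, sub_zero, zero_sub, neg_neg, sub_self, mul_neg, neg_mul] at key
    exact sub_eq_zero.mp key



open Glnm in
/-- three-index commutator identity for `p(a)=p(b)=0`, `p(c)=1`. -/
theorem triple_commutator_bbf (n m k : ℕ) (hk : 1 ≤ k)
    (a b c : Fin (n + m)) (hab : a ≠ b) (hac : a ≠ c) (hbc : b ≠ c)
    (hpa : (a : ℕ) < n) (hpb : (b : ℕ) < n) (hpc : n ≤ (c : ℕ))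
    (lamA lamB lamC : ℂ) (hl1 : lamA ≠ lamB) (hl2 : lamA ≠ lamC) (hl3 : lamB ≠ lamC) :
    -comm ((lamA - lamB)⁻¹ • (Egen n (n + m) k a b * Egen n (n + m) k b a))
        ((lamB - lamC)⁻¹ • (Egen n (n + m) k b c * Egen n (n + m) k c b)) +
      comm ((lamA - lamC)⁻¹ • (Egen n (n + m) k a c * Egen n (n + m) k c a))
        ((lamB - lamC)⁻¹ • (Egen n (n + m) k b c * Egen n (n + m) k c b)) -
      comm ((lamA - lamC)⁻¹ • (Egen n (n + m) k a c * Egen n (n + m) k c a))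
        ((lamB - lamA)⁻¹ • (Egen n (n + m) k b a * Egen n (n + m) k a b)) = 0 := by
  have pa : par n (n + m) a = 0 := if_pos hpa
  have pb : par n (n + m) b = 0 := if_pos hpb
  have pcc : par n (n + m) c = 1 := if_neg (not_lt.mpr hpc)
  have h1 : (Egen n (n + m) k b a) * (Egen n (n + m) k a b) - (Egen n (n + m) k a b) * (Egen n (n + m) k b a) = (Egen n (n + m) k b b) - (Egen n (n + m) k a a) := by
    have t := Ebracket (n := n) (N := n + m) (k := k) b a a b
    simpa [pa, pb, pcc, hab, hab.symm, hac, hac.symm, hbc, hbc.symm] using t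
  have h2 : (Egen n (n + m) k b c) * (Egen n (n + m) k a b) - (Egen n (n + m) k a b) * (Egen n (n + m) k b c) = -(Egen n (n + m) k a c) := by
    have t := Ebracket (n := n) (N := n + m) (k := k) b c a b
    simpa [pa, pb, pcc, hab, hab.symm, hac, hac.symm, hbc, hbc.symm] using t
  have h3 : (Egen n (n + m) k c b) * (Egen n (n + m) k a b) - (Egen n (n + m) k a b) * (Egen n (n + m) k c b) = 0 := by
    have t := Ebracket (n := n) (N := n + m) (k := k) c b a b
    simpa [pa, pb, pcc, hab, hab.symm, hac, hac.symm, hbc, hbc.symm] using t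
  have h4 : (Egen n (n + m) k a c) * (Egen n (n + m) k a b) - (Egen n (n + m) k a b) * (Egen n (n + m) k a c) = 0 := by
    have t := Ebracket (n := n) (N := n + m) (k := k) a c a b
    simpa [pa, pb, pcc, hab, hab.symm, hac, hac.symm, hbc, hbc.symm] using t
  have h5 : (Egen n (n + m) k c a) * (Egen n (n + m) k a b) - (Egen n (n + m) k a b) * (Egen n (n + m) k c a) = (Egen n (n + m) k c b) := by
    have t := Ebracket (n := n) (N := n + m) (k := k) c a a b
    simpa [pa, pb, pcc, hab, hab.symm, hac, hac.symm, hbc, hbc.symm] using t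
  have h6 : (Egen n (n + m) k b c) * (Egen n (n + m) k b a) - (Egen n (n + m) k b a) * (Egen n (n + m) k b c) = 0 := by
    have t := Ebracket (n := n) (N := n + m) (k := k) b c b a
    simpa [pa, pb, pcc, hab, hab.symm, hac, hac.symm, hbc, hbc.symm] using t
  have h7 : (Egen n (n + m) k c b) * (Egen n (n + m) k b a) - (Egen n (n + m) k b a) * (Egen n (n + m) k c b) = (Egen n (n + m) k c a) := by
    have t := Ebracket (n := n) (N := n + m) (k := k) c b b a
    simpa [pa, pb, pcc, hab, hab.symm, hac, hac.symm, hbc, hbc.symm] using t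
  have h8 : (Egen n (n + m) k a c) * (Egen n (n + m) k b a) - (Egen n (n + m) k b a) * (Egen n (n + m) k a c) = -(Egen n (n + m) k b c) := by
    have t := Ebracket (n := n) (N := n + m) (k := k) a c b a
    simpa [pa, pb, pcc, hab, hab.symm, hac, hac.symm, hbc, hbc.symm] using t
  have h9 : (Egen n (n + m) k c a) * (Egen n (n + m) k b a) - (Egen n (n + m) k b a) * (Egen n (n + m) k c a) = 0 := by
    have t := Ebracket (n := n) (N := n + m) (k := k) c a b a
    simpa [pa, pb, pcc, hab, hab.symm, hac, hac.symm, hbc, hbc.symm] using t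
  have h10 : (Egen n (n + m) k c b) * (Egen n (n + m) k b c) + (Egen n (n + m) k b c) * (Egen n (n + m) k c b) = (Egen n (n + m) k c c) + (Egen n (n + m) k b b) := by
    have t := Ebracket (n := n) (N := n + m) (k := k) c b b c
    simpa [pa, pb, pcc, hab, hab.symm, hac, hac.symm, hbc, hbc.symm] using t
  have h11 : (Egen n (n + m) k a c) * (Egen n (n + m) k b c) + (Egen n (n + m) k b c) * (Egen n (n + m) k a c) = 0 := by
    have t := Ebracket (n := n) (N := n + m) (k := k) a c b c
    simpa [pa, pb, pcc, hab, hab.symm, hac, hac.symm, hbc, hbc.symm] using t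
  have h12 : (Egen n (n + m) k c a) * (Egen n (n + m) k b c) + (Egen n (n + m) k b c) * (Egen n (n + m) k c a) = (Egen n (n + m) k b a) := by
    have t := Ebracket (n := n) (N := n + m) (k := k) c a b c
    simpa [pa, pb, pcc, hab, hab.symm, hac, hac.symm, hbc, hbc.symm] using t
  have h13 : (Egen n (n + m) k a c) * (Egen n (n + m) k c b) + (Egen n (n + m) k c b) * (Egen n (n + m) k a c) = (Egen n (n + m) k a b) := by
    have t := Ebracket (n := n) (N := n + m) (k := k) a c c b
    simpa [pa, pb, pcc, hab, hab.symm, hac, hac.symm, hbc, hbc.symm] using t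
  have h14 : (Egen n (n + m) k c a) * (Egen n (n + m) k c b) + (Egen n (n + m) k c b) * (Egen n (n + m) k c a) = 0 := by
    have t := Ebracket (n := n) (N := n + m) (k := k) c a c b
    simpa [pa, pb, pcc, hab, hab.symm, hac, hac.symm, hbc, hbc.symm] using t
  have h15 : (Egen n (n + m) k c a) * (Egen n (n + m) k a c) + (Egen n (n + m) k a c) * (Egen n (n + m) k c a) = (Egen n (n + m) k c c) + (Egen n (n + m) k a a) := by
    have t := Ebracket (n := n) (N := n + m) (k := k) c a a c
    simpa [pa, pb, pcc, hab, hab.symm, hac, hac.symm, hbc, hbc.symm] using t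
  obtain ⟨k1, k2⟩ := cert_lemma (Egen n (n + m) k a b) (Egen n (n + m) k b a) (Egen n (n + m) k b c) (Egen n (n + m) k c b) (Egen n (n + m) k a c) (Egen n (n + m) k c a) (Egen n (n + m) k a a) (Egen n (n + m) k b b) (Egen n (n + m) k c c) h1 h2 h3 h4 h5 h6 h7 h8 h9 h10 h11 h12 h13 h14 h15
  have csmul : ∀ (r s : ℂ) (M L : Matrix (Fin k → Fin (n + m)) (Fin k → Fin (n + m)) ℂ),
      Glnm.comm (r • M) (s • L) = (r * s) • comm M L := by
    intro r s M L
    unfold Glnm.comm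
    rw [smul_mul_assoc, smul_mul_assoc, mul_smul_comm, mul_smul_comm, smul_smul, smul_smul,
        mul_comm s r, smul_sub]
  rw [csmul, csmul, csmul]
  have e2 : Glnm.comm ((Egen n (n + m) k a c) * (Egen n (n + m) k c a)) ((Egen n (n + m) k b c) * (Egen n (n + m) k c b)) = Glnm.comm ((Egen n (n + m) k a b) * (Egen n (n + m) k b a)) ((Egen n (n + m) k b c) * (Egen n (n + m) k c b)) := k1.symm
  have e3 : Glnm.comm ((Egen n (n + m) k a c) * (Egen n (n + m) k c a)) ((Egen n (n + m) k b a) * (Egen n (n + m) k a b)) = Glnm.comm ((Egen n (n + m) k a b) * (Egen n (n + m) k b a)) ((Egen n (n + m) k b c) * (Egen n (n + m) k c b)) := k2.symm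
  rw [e2, e3]
  rw [← neg_smul, ← add_smul, ← sub_smul]
  have hsc : -((lamA - lamB)⁻¹ * (lamB - lamC)⁻¹) + (lamA - lamC)⁻¹ * (lamB - lamC)⁻¹
      - (lamA - lamC)⁻¹ * (lamB - lamA)⁻¹ = 0 := by
    have d1 : lamA - lamB ≠ 0 := sub_ne_zero.mpr hl1
    have d2 : lamA - lamC ≠ 0 := sub_ne_zero.mpr hl2
    have d3 : lamB - lamC ≠ 0 := sub_ne_zero.mpr hl3
    have d4 : lamB - lamA ≠ 0 := sub_ne_zero.mpr (Ne.symm hl1)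
    field_simp
    ring
  rw [hsc, zero_smul]
end
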